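/- arXiv:0712.2393 — 4 statements merged into one kernel-verified Lean document; each statement's English description precedes it below -/
import Mathlib

section
/- If H is a selective coideal on a topological Ramsey space R, then for every partition f : AR_2 → {0,1} of the second approximations and every A ∈ H, there exists B ∈ H with B ≤ A such that f is constant on AR_2(B) (the set of second approximations of elements of R compatible with B below B). -/
open Set

/-- A triple `(R, ≤, r)` with a finitization quasi-order, satisfying axioms
(A.1)–(A.4) of Todorcevic's abstract Ramsey theory. -/
structure TRSpace where
  R : Type
  AR : Type
  le : R → R → Prop
  r : ℕ → R → AR
  lefin : AR → AR → Prop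
  le_refl : ∀ A, le A A
  le_trans : ∀ A B C, le A B → le B C → le A C
  lefin_refl : ∀ a, lefin a a
  lefin_trans : ∀ a b c, lefin a b → lefin b c → lefin a c
  A1 : ∀ A B, r 0 A = r 0 B
  A2 : ∀ A B, A ≠ B → ∃ n, r n A ≠ r n B
  A3 : ∀ A B n m, r n A = r m B → n = m ∧ ∀ i < n, r i A = r i B
  A4i : ∀ A B, le A B ↔ ∀ n, ∃ m, lefin (r n A) (r m B)
  A4ii : ∀ a, {b | lefin b a}.Finite

namespace TRSpace

variable {S : TRSpace}

/-- The Ellentuck-type neighborhood `[a, A]`. -/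
def nbhd (S : TRSpace) (a : S.AR) (A : S.R) : Set S.R :=
  {B | (∃ n, S.r n B = a) ∧ S.le B A}

/-- `AR(A)`: approximations compatible with `A`. -/
def ARof (S : TRSpace) (A : S.R) : Set S.AR := {a | (S.nbhd a A).Nonempty}

/-- `AR_n`: the `n`-th approximations. -/
def ARn (S : TRSpace) (n : ℕ) : Set S.AR := {a | ∃ A, S.r n A = a}

/-- The length of an approximation: the unique `n` with `a = r n A`. -/
noncomputable def len (S : TRSpace) (a : S.AR) : ℕ := sInf {n | ∃ A, S.r n A = a}

/-- `depth_A(a)`: the least `n` with `a ≤_fin r n A`. -/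
noncomputable def depth (S : TRSpace) (A : S.R) (a : S.AR) : ℕ :=
  sInf {n | S.lefin a (S.r n A)}

/-- The neighborhood `[n, A] = [r_n(A), A]`. -/
def nbhdN (S : TRSpace) (n : ℕ) (A : S.R) : Set S.R := S.nbhd (S.r n A) A

/-- Axioms (A.5) (amalgamation) and (A.6) (pigeonhole), making `S` a
topological Ramsey space (together with metric closedness, which is
implicit in the abstract formulation used here). -/
structure IsTopRamsey (S : TRSpace) : Prop where
  A5i : ∀ A, ∀ a ∈ S.ARof A, ∀ B ∈ S.nbhdN (S.depth A a) A, (S.nbhd a B).Nonempty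
  A5ii : ∀ A, ∀ a ∈ S.ARof A, ∀ B ∈ S.nbhd a A,
    ∃ A' ∈ S.nbhdN (S.depth A a) A, S.nbhd a A' ⊆ S.nbhd a B
  A6 : ∀ A, ∀ a ∈ S.ARof A, ∀ O : Set S.AR,
    ∃ B ∈ S.nbhdN (S.depth A a) A,
      (S.r (S.len a + 1) '' (S.nbhd a B) ⊆ O) ∨ (S.r (S.len a + 1) '' (S.nbhd a B) ⊆ Oᶜ)

/-- A coideal on `S`: a family upward closed under `≤` satisfying
(A.5) mod `H` and (A.6) mod `H`. -/
structure Coideal (S : TRSpace) where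
  H : Set S.R
  nonempty : H.Nonempty
  up : ∀ A B, S.le A B → A ∈ H → B ∈ H
  A5i : ∀ A ∈ H, ∀ a ∈ S.ARof A, ∀ B ∈ S.nbhdN (S.depth A a) A ∩ H,
    (S.nbhd a B ∩ H).Nonempty
  A5ii : ∀ A ∈ H, ∀ a ∈ S.ARof A, ∀ B ∈ S.nbhd a A ∩ H,
    ∃ A' ∈ S.nbhdN (S.depth A a) A ∩ H, S.nbhd a A' ⊆ S.nbhd a B
  A6 : ∀ a : S.AR, ∀ O : Set S.AR, ∀ A ∈ H, (S.nbhd a A).Nonempty →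
    ∃ B ∈ S.nbhdN (S.depth A a) A ∩ H,
      (S.r (S.len a + 1) '' (S.nbhd a B) ⊆ O) ∨ (S.r (S.len a + 1) '' (S.nbhd a B) ⊆ Oᶜ)

/-- `H` is selective: families `(A_a)_{a ∈ I}` of members of `H` below `A`
can be diagonalized inside `H`. -/
def Coideal.Selective (𝓗 : Coideal S) : Prop :=
  ∀ A ∈ 𝓗.H, ∀ (I : Set S.AR) (As : S.AR → S.R),
    (∀ a ∈ I, As a ∈ 𝓗.H ∧ S.le (As a) A ∧ (S.nbhd a (As a)).Nonempty) →
    ∃ B ∈ 𝓗.H, S.le B A ∧ ∀ a ∈ I ∩ S.ARof B, S.nbhd a B ⊆ S.nbhd a (As a)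

/-- The sequence `(D_a)_{a ∈ I}` of subsets of `H` has the D–O property below `A`. -/
def Coideal.DOProp (𝓗 : Coideal S) (A : S.R) (I : Set S.AR) (D : S.AR → Set S.R) : Prop :=
  (∀ a ∈ I, D a ⊆ 𝓗.H ∧ ∃ C ∈ D a, (S.nbhd a C).Nonempty) ∧
  (∀ a ∈ I, ∀ B ∈ S.nbhd a A ∩ 𝓗.H, ∃ C ∈ D a, S.le C B) ∧
  (∀ a ∈ I, ∀ B ∈ D a, S.le B A → ∀ C ∈ S.nbhdN (S.depth B a) B ∩ 𝓗.H, C ∈ D a)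

/-- `X` is `H`-Ramsey. -/
def Coideal.HRamsey (𝓗 : Coideal S) (X : Set S.R) : Prop :=
  ∀ (a : S.AR) (A : S.R), A ∈ 𝓗.H → (S.nbhd a A).Nonempty →
    ∃ B ∈ S.nbhd a A ∩ 𝓗.H, (S.nbhd a B).Nonempty ∧
      (S.nbhd a B ⊆ X ∨ S.nbhd a B ⊆ Xᶜ)

/-- `X` is `H`-Ramsey null. -/
def Coideal.HRamseyNull (𝓗 : Coideal S) (X : Set S.R) : Prop :=
  ∀ (a : S.AR) (A : S.R), A ∈ 𝓗.H → (S.nbhd a A).Nonempty →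
    ∃ B ∈ S.nbhd a A ∩ 𝓗.H, (S.nbhd a B).Nonempty ∧ S.nbhd a B ⊆ Xᶜ

/-- `X` is `H`-Baire. -/
def Coideal.HBaire (𝓗 : Coideal S) (X : Set S.R) : Prop :=
  ∀ (a : S.AR) (A : S.R), A ∈ 𝓗.H → (S.nbhd a A).Nonempty →
    ∃ (b : S.AR) (B : S.R), B ∈ 𝓗.H ∧ (S.nbhd b B).Nonempty ∧
      S.nbhd b B ⊆ S.nbhd a A ∧ (S.nbhd b B ⊆ X ∨ S.nbhd b B ⊆ Xᶜ)

end TRSpace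


open TRSpace in
lemma TRSpace.len_r (S : TRSpace) (n : ℕ) (X : S.R) : S.len (S.r n X) = n := by
  have h : {m | ∃ A, S.r m A = S.r n X} = {n} := by
    ext m
    constructor
    · rintro ⟨A, hA⟩
      exact (S.A3 A X m n hA).1
    · rintro rfl
      exact ⟨X, rfl⟩
  unfold TRSpace.len
  rw [h]
  exact csInf_singleton n

open TRSpace in
/-- for a selective coideal `H`, every partition of the
second approximations `AR_2` into two pieces is constant on `AR_2(B)`
for some `B ∈ H` below any given `A ∈ H`. -/
theorem selective_pigeonhole_AR2 (S : TRSpace) (hS : S.IsTopRamsey)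
    (𝓗 : Coideal S) (hsel : 𝓗.Selective)
    (f : S.AR → Bool) (A : S.R) (hA : A ∈ 𝓗.H) :
    ∃ B ∈ 𝓗.H, S.le B A ∧
      ∀ a ∈ S.ARn 2 ∩ S.ARof B, ∀ b ∈ S.ARn 2 ∩ S.ARof B, f a = f b := by
  classical
  -- Step 1: for each a with [a,A] nonempty, pick A_a from (A.6) mod H.
  have hAs : ∀ a, (S.nbhd a A).Nonempty → ∃ B, B ∈ S.nbhdN (S.depth A a) A ∩ 𝓗.H ∧
      ((S.r (S.len a + 1) '' (S.nbhd a B) ⊆ {b | f b = true}) ∨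
       (S.r (S.len a + 1) '' (S.nbhd a B) ⊆ {b | f b = true}ᶜ)) := by
    intro a ha
    obtain ⟨B, hB1, hB2⟩ := 𝓗.A6 a {b | f b = true} A hA ha
    exact ⟨B, hB1, hB2⟩
  set I : Set S.AR := {a | (S.nbhd a A).Nonempty} with hIdef
  set As : S.AR → S.R := fun a =>
    if h : (S.nbhd a A).Nonempty then (hAs a h).choose else A with hAsdef
  have hAsspec : ∀ a ∈ I, (As a) ∈ S.nbhdN (S.depth A a) A ∩ 𝓗.H ∧
      ((S.r (S.len a + 1) '' (S.nbhd a (As a)) ⊆ {b | f b = true}) ∨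
       (S.r (S.len a + 1) '' (S.nbhd a (As a)) ⊆ {b | f b = true}ᶜ)) := by
    intro a ha
    have : As a = (hAs a ha).choose := dif_pos ha
    rw [this]
    exact (hAs a ha).choose_spec
  have hAsH : ∀ a ∈ I, As a ∈ 𝓗.H ∧ S.le (As a) A ∧ (S.nbhd a (As a)).Nonempty := by
    intro a ha
    obtain ⟨⟨hmem, hH⟩, _⟩ := hAsspec a ha
    refine ⟨hH, hmem.2, ?_⟩
    obtain ⟨C, hC, _⟩ := 𝓗.A5i A hA a ha (As a) ⟨hmem, hH⟩
    exact ⟨C, hC⟩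
  -- Step 2: selectivity
  obtain ⟨C, hCH, hCA, hCdiag⟩ := hsel A hA I As hAsH
  -- g a : the constant color of 2-extensions below As a
  set g : S.AR → Bool := fun a =>
    if h : (S.nbhd a (As a)).Nonempty then f (S.r (S.len a + 1) h.choose) else false
    with hgdef
  have hg : ∀ a ∈ I, ∀ X ∈ S.nbhd a (As a), f (S.r (S.len a + 1) X) = g a := by
    intro a ha X hX
    have hne : (S.nbhd a (As a)).Nonempty := ⟨X, hX⟩
    have hgeq : g a = f (S.r (S.len a + 1) hne.choose) := by simp [hgdef, hne]
    rw [hgeq]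
    obtain ⟨_, hdich⟩ := hAsspec a ha
    rcases hdich with hO | hO
    · have h1 := hO ⟨X, hX, rfl⟩
      have h2 := hO ⟨hne.choose, hne.choose_spec, rfl⟩
      simp only [Set.mem_setOf_eq] at h1 h2
      rw [h1, h2]
    · have h1 := hO ⟨X, hX, rfl⟩
      have h2 := hO ⟨hne.choose, hne.choose_spec, rfl⟩
      simp only [Set.mem_compl_iff, Set.mem_setOf_eq, Bool.not_eq_true] at h1 h2
      rw [h1, h2]
  -- Step 3: apply (A.6) mod H again at depth 0 with color g
  have hC0 : (S.nbhd (S.r 0 C) C).Nonempty := ⟨C, ⟨0, rfl⟩, S.le_refl C⟩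
  obtain ⟨B, ⟨hBC, hBH⟩, hBdich⟩ := 𝓗.A6 (S.r 0 C) {a | g a = true} C hCH hC0
  have hBleC : S.le B C := hBC.2
  refine ⟨B, hBH, S.le_trans B C A hBleC hCA, ?_⟩
  -- every X ≤ B lies in [r 0 C, B]
  have hmemB : ∀ X : S.R, S.le X B → X ∈ S.nbhd (S.r 0 C) B := by
    intro X hX
    exact ⟨⟨0, S.A1 X C⟩, hX⟩
  rw [S.len_r 0 C] at hBdich
  -- key: for a ∈ AR₂(B), f a = g (r 1 X) for some X ≤ B, which is constant
  have key : ∀ a ∈ S.ARn 2 ∩ S.ARof B, ∃ X : S.R, S.le X B ∧ f a = g (S.r 1 X) := by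
    rintro a ⟨⟨Y, hY⟩, X, ⟨n, hXn⟩, hXB⟩
    have hn2 : n = 2 := (S.A3 X Y n 2 (hXn.trans hY.symm)).1
    subst hn2
    refine ⟨X, hXB, ?_⟩
    have hXC : S.le X C := S.le_trans X B C hXB hBleC
    have hXA : S.le X A := S.le_trans X C A hXC hCA
    have h1I : S.r 1 X ∈ I := ⟨X, ⟨1, rfl⟩, hXA⟩
    have h1C : S.r 1 X ∈ S.ARof C := ⟨X, ⟨1, rfl⟩, hXC⟩
    have hsub := hCdiag (S.r 1 X) ⟨h1I, h1C⟩
    have hXin : X ∈ S.nbhd (S.r 1 X) (As (S.r 1 X)) := hsub ⟨⟨1, rfl⟩, hXC⟩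
    have := hg (S.r 1 X) h1I X hXin
    rw [S.len_r 1 X] at this
    rw [← hXn]
    norm_num at this
    exact this
  rintro a ha b hb
  obtain ⟨X, hXB, hfa⟩ := key a ha
  obtain ⟨Y, hYB, hfb⟩ := key b hb
  rw [hfa, hfb]
  rcases hBdich with hO | hO
  · have h1 := hO ⟨X, hmemB X hXB, rfl⟩
    have h2 := hO ⟨Y, hmemB Y hYB, rfl⟩
    simp only [Set.mem_setOf_eq] at h1 h2
    rw [h1, h2]
  · have h1 := hO ⟨X, hmemB X hXB, rfl⟩
    have h2 := hO ⟨Y, hmemB Y hYB, rfl⟩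
    simp only [Set.mem_compl_iff, Set.mem_setOf_eq, Bool.not_eq_true] at h1 h2
    rw [h1, h2]
end

section
/- (Abstract local Galvin lemma) Let H be a selective coideal on a topological Ramsey space R. For every family F ⊆ AR and every A ∈ H there exists B ∈ H with B ≤ A such that either (1) AR(B) ∩ F = ∅, or (2) for every C ∈ H with C ≤ B there exists n ∈ ℕ with r_n(C) ∈ F. -/
open Set

namespace TRSpace

variable {S : TRSpace}

/-- `B` accepts `a` (w.r.t. `𝓗`, `F`). -/
def acc (𝓗 : Coideal S) (F : Set S.AR) (B : S.R) (a : S.AR) : Prop :=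
  ∀ C ∈ S.nbhd a B, C ∈ 𝓗.H → ∃ n, S.r n C ∈ F

/-- `B` rejects `a` (w.r.t. `𝓗`, `F`). -/
def rej (𝓗 : Coideal S) (F : Set S.AR) (B : S.R) (a : S.AR) : Prop :=
  ∀ D ∈ 𝓗.H, S.le D B → (S.nbhd a D).Nonempty → ¬ acc 𝓗 F D a

lemma nbhd_mono {a : S.AR} {B C : S.R} (h : S.le B C) :
    S.nbhd a B ⊆ S.nbhd a C := fun E hE => ⟨hE.1, S.le_trans E B C hE.2 h⟩

lemma len_r_s2 (S : TRSpace) (n : ℕ) (D : S.R) : S.len (S.r n D) = n := by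
  have h : {m | ∃ A, S.r m A = S.r n D} = {n} := by
    ext m
    simp only [Set.mem_setOf_eq, Set.mem_singleton_iff]
    constructor
    · rintro ⟨A, hA⟩; exact (S.A3 A D m n hA).1
    · rintro rfl; exact ⟨D, rfl⟩
  rw [TRSpace.len, h, csInf_singleton]

lemma exists_mem_H (𝓗 : Coideal S) {A : S.R} (hA : A ∈ 𝓗.H) {a : S.AR}
    (ha : (S.nbhd a A).Nonempty) : (S.nbhd a A ∩ 𝓗.H).Nonempty := by
  have hself : A ∈ S.nbhdN (S.depth A a) A ∩ 𝓗.H :=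
    ⟨⟨⟨S.depth A a, rfl⟩, S.le_refl A⟩, hA⟩
  exact 𝓗.A5i A hA a ha A hself

end TRSpace

open TRSpace in
/-- abstract local Galvin lemma. -/
theorem local_galvin_lemma (S : TRSpace) (hS : S.IsTopRamsey)
    (𝓗 : Coideal S) (hsel : 𝓗.Selective)
    (F : Set S.AR) (A : S.R) (hA : A ∈ 𝓗.H) :
    ∃ B ∈ 𝓗.H, S.le B A ∧
      (S.ARof B ∩ F = ∅ ∨
        ∀ C ∈ 𝓗.H, S.le C B → ∃ n : ℕ, S.r n C ∈ F) := by
  classical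
  -- Step 1: for every `A' ∈ H` and `a ∈ AR(A')` there is `C ≤ A'` deciding `a`.
  have hdec : ∀ A' ∈ 𝓗.H, ∀ a ∈ S.ARof A', ∃ C, C ∈ 𝓗.H ∧ S.le C A' ∧
      (S.nbhd a C).Nonempty ∧ (acc 𝓗 F C a ∨ rej 𝓗 F C a) := by
    intro A' hA' a ha
    by_cases h : ∃ C, C ∈ 𝓗.H ∧ S.le C A' ∧ (S.nbhd a C).Nonempty ∧ acc 𝓗 F C a
    · obtain ⟨C, h1, h2, h3, h4⟩ := h
      exact ⟨C, h1, h2, h3, Or.inl h4⟩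
    · push_neg at h
      refine ⟨A', hA', S.le_refl A', ha, Or.inr ?_⟩
      intro D hD hle hne hacc
      exact h D hD hle hne hacc
  -- choose deciding refinements below `A`
  have hchoice : ∀ a : S.AR, ∃ C, a ∈ S.ARof A → (C ∈ 𝓗.H ∧ S.le C A ∧
      (S.nbhd a C).Nonempty ∧ (acc 𝓗 F C a ∨ rej 𝓗 F C a)) := by
    intro a
    by_cases ha : a ∈ S.ARof A
    · obtain ⟨C, h1, h2, h3, h4⟩ := hdec A hA a ha
      exact ⟨C, fun _ => ⟨h1, h2, h3, h4⟩⟩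
    · exact ⟨A, fun h => absurd h ha⟩
  choose As hAs using hchoice
  -- Step 2: diagonalize to get `B₀` deciding all of its approximations.
  obtain ⟨B₀, hB₀H, hB₀le, hB₀sub⟩ :=
    hsel A hA (S.ARof A) As
      (fun a ha => ⟨(hAs a ha).1, (hAs a ha).2.1, (hAs a ha).2.2.1⟩)
  have hARsub : S.ARof B₀ ⊆ S.ARof A := by
    rintro a ⟨D, hD⟩
    exact ⟨D, nbhd_mono hB₀le hD⟩
  have hdecB₀ : ∀ a ∈ S.ARof B₀, acc 𝓗 F B₀ a ∨ rej 𝓗 F B₀ a := by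
    intro a ha
    have haA : a ∈ S.ARof A := hARsub ha
    obtain ⟨hH, hle, hne, hd⟩ := hAs a haA
    have hsub : S.nbhd a B₀ ⊆ S.nbhd a (As a) := hB₀sub a ⟨haA, ha⟩
    rcases hd with hacc | hrej
    · exact Or.inl (fun C hC hCH => hacc C (hsub hC) hCH)
    · refine Or.inr ?_
      intro D hDH hDle hDne hDacc
      obtain ⟨E, hE, hEH⟩ := exists_mem_H 𝓗 hDH hDne
      have hE' : E ∈ S.nbhd a (As a) := hsub (nbhd_mono hDle hE)
      refine hrej E hEH hE'.2 ⟨E, hE.1, S.le_refl E⟩ ?_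
      intro G hG hGH
      exact hDacc G ⟨hG.1, S.le_trans G E D hG.2 hE.2⟩ hGH
  -- a₀ : the 0-th approximation
  set a₀ := S.r 0 B₀ with ha₀def
  have ha₀B₀ : a₀ ∈ S.ARof B₀ := ⟨B₀, ⟨0, rfl⟩, S.le_refl B₀⟩
  by_cases hrej0 : rej 𝓗 F B₀ a₀
  · -- rejection case: build `B` with `AR(B) ∩ F = ∅`.
    -- Step 3: if `B₀` rejects `a`, there is `C` with all one-step extensions rejected.
    have hClaim2 : ∀ a ∈ S.ARof B₀, rej 𝓗 F B₀ a → ∃ C, C ∈ 𝓗.H ∧ S.le C B₀ ∧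
        (S.nbhd a C).Nonempty ∧
        ∀ b ∈ S.r (S.len a + 1) '' (S.nbhd a C), rej 𝓗 F B₀ b := by
      intro a ha harej
      obtain ⟨C, ⟨hCN, hCH⟩, hdich⟩ :=
        𝓗.A6 a {b | acc 𝓗 F B₀ b} B₀ hB₀H ha
      have hCle : S.le C B₀ := hCN.2
      obtain ⟨D0, hD0, hD0H⟩ := 𝓗.A5i B₀ hB₀H a ha C ⟨hCN, hCH⟩
      rcases hdich with hsub | hsub
      · exfalso
        refine harej C hCH hCle ⟨D0, hD0⟩ ?_
        intro E hE hEH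
        have hb : S.r (S.len a + 1) E ∈ {b | acc 𝓗 F B₀ b} := hsub ⟨E, hE, rfl⟩
        exact hb E ⟨⟨S.len a + 1, rfl⟩, S.le_trans E C B₀ hE.2 hCle⟩ hEH
      · refine ⟨C, hCH, hCle, ⟨D0, hD0⟩, ?_⟩
        rintro b ⟨E, hE, rfl⟩
        have hbB₀ : S.r (S.len a + 1) E ∈ S.ARof B₀ :=
          ⟨E, ⟨S.len a + 1, rfl⟩, S.le_trans E C B₀ hE.2 hCle⟩
        rcases hdecB₀ _ hbB₀ with hacc | hr
        · exact absurd hacc (hsub ⟨E, hE, rfl⟩)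
        · exact hr
    -- choose such C's
    have hchoice2 : ∀ a : S.AR, ∃ C, a ∈ S.ARof B₀ → (C ∈ 𝓗.H ∧ S.le C B₀ ∧
        (S.nbhd a C).Nonempty ∧
        (rej 𝓗 F B₀ a → ∀ b ∈ S.r (S.len a + 1) '' (S.nbhd a C), rej 𝓗 F B₀ b)) := by
      intro a
      by_cases ha : a ∈ S.ARof B₀
      · by_cases har : rej 𝓗 F B₀ a
        · obtain ⟨C, h1, h2, h3, h4⟩ := hClaim2 a ha har
          exact ⟨C, fun _ => ⟨h1, h2, h3, fun _ => h4⟩⟩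
        · exact ⟨B₀, fun _ => ⟨hB₀H, S.le_refl B₀, ha, fun h => absurd h har⟩⟩
      · exact ⟨B₀, fun h => absurd h ha⟩
    choose Cs hCs using hchoice2
    obtain ⟨B, hBH, hBle, hBsub⟩ :=
      hsel B₀ hB₀H (S.ARof B₀) Cs
        (fun a ha => ⟨(hCs a ha).1, (hCs a ha).2.1, (hCs a ha).2.2.1⟩)
    have hARB : S.ARof B ⊆ S.ARof B₀ := by
      rintro a ⟨D, hD⟩
      exact ⟨D, nbhd_mono hBle hD⟩
    -- induction: every approximation of `B` is rejected by `B₀`.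
    have hrejAll : ∀ m : ℕ, ∀ b ∈ S.ARof B, S.len b = m → rej 𝓗 F B₀ b := by
      intro m
      induction m with
      | zero =>
        intro b hb hlen
        obtain ⟨D, ⟨n, hn⟩, hDle⟩ := hb
        have hn0 : n = 0 := by
          have := S.len_r_s2 n D
          rw [hn, hlen] at this
          omega
        subst hn0
        have : b = a₀ := by rw [← hn, ha₀def, S.A1 D B₀]
        rw [this]; exact hrej0
      | succ k ih =>
        intro b hb hlen
        obtain ⟨D, ⟨n, hn⟩, hDle⟩ := hb
        have hnk : n = k + 1 := by
          have := S.len_r_s2 n D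
          rw [hn, hlen] at this
          omega
        subst hnk
        set a := S.r k D with hadef
        have haB : a ∈ S.ARof B := ⟨D, ⟨k, rfl⟩, hDle⟩
        have haB₀ : a ∈ S.ARof B₀ := hARB haB
        have hlena : S.len a = k := S.len_r_s2 k D
        have hreja : rej 𝓗 F B₀ a := ih a haB hlena
        have h4 := (hCs a haB₀).2.2.2 hreja
        refine h4 b ⟨D, ?_, ?_⟩
        · exact hBsub a ⟨haB₀, haB⟩ ⟨⟨k, rfl⟩, hDle⟩
        · rw [hlena, hn]
    refine ⟨B, hBH, S.le_trans B B₀ A hBle hB₀le, Or.inl ?_⟩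
    ext b
    simp only [Set.mem_inter_iff, Set.mem_empty_iff_false, iff_false, not_and]
    intro hbB hbF
    have hr := hrejAll (S.len b) b hbB rfl
    obtain ⟨D, hD⟩ := hbB
    obtain ⟨C, hC, hCH⟩ := exists_mem_H 𝓗 hBH ⟨D, hD⟩
    refine hr C hCH (S.le_trans C B B₀ hC.2 hBle) ⟨C, hC.1, S.le_refl C⟩ ?_
    intro E hE hEH
    obtain ⟨n, hn⟩ := hE.1
    exact ⟨n, hn ▸ hbF⟩
  · -- acceptance case: `B₀` itself witnesses the second alternative.
    have hacc0 : acc 𝓗 F B₀ a₀ := by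
      rcases hdecB₀ a₀ ha₀B₀ with h | h
      · exact h
      · exact absurd h hrej0
    refine ⟨B₀, hB₀H, hB₀le, Or.inr ?_⟩
    intro C hCH hCle
    exact hacc0 C ⟨⟨0, S.A1 C B₀⟩, hCle⟩ hCH
end

section
/- (Gowers' FIN_k theorem) For every positive integer k, every r ≥ 1, and every coloring f : FIN_k → {0,…,r−1}, there exists an infinite basic block sequence A = (a_n)_{n∈ℕ} in FIN_k such that f is constant on the partial subsemigroup [A] generated by A, consisting of all sums T^{(j_0)}(a_{n_0}) + ⋯ + T^{(j_m)}(a_{n_m}) with n_0 < ⋯ < n_m, j_0,…,j_m ∈ {0,…,k}, and j_i = 0 for some i. -/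
open Finset

/-- `FIN_k`: finitely supported functions `p : ℕ → ℕ` bounded by `k`
with `k` in their range. -/
def FINk (k : ℕ) : Set (ℕ → ℕ) :=
  {p | {n | p n ≠ 0}.Finite ∧ (∀ n, p n ≤ k) ∧ ∃ n, p n = k}

/-- The tetris operation `T(p)(n) = max(p(n) − 1, 0)`. -/
def tetris (p : ℕ → ℕ) : ℕ → ℕ := fun n => p n - 1

/-- An infinite basic block sequence in `FIN_k`: consecutive terms
have increasing supports. -/
def IsBlockSeq (k : ℕ) (A : ℕ → (ℕ → ℕ)) : Prop :=
  (∀ n, A n ∈ FINk k) ∧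
  ∀ n m : ℕ, n < m → ∀ i j : ℕ, A n i ≠ 0 → A m j ≠ 0 → i < j

/-- The combinatorial span `[A]` of a block sequence: all sums
`T^(j₀)(a_{n₀}) + ⋯ + T^(jₘ)(a_{nₘ})` with `n₀ < ⋯ < nₘ`,
`j₀, …, jₘ ∈ {0, …, k}` and `jᵢ = 0` for some `i`. -/
def blockSpan (k : ℕ) (A : ℕ → (ℕ → ℕ)) : Set (ℕ → ℕ) :=
  {p | ∃ (m : ℕ) (ns js : Fin (m + 1) → ℕ), StrictMono ns ∧
    (∀ i, js i ≤ k) ∧ (∃ i, js i = 0) ∧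
    p = fun t => ∑ i : Fin (m + 1), (tetris^[js i] (A (ns i))) t}

namespace GowersAux

/-- type synonym carrying the capped-addition semigroup structure -/
def Wd (_k : ℕ) : Type := ℕ → ℕ

instance (k : ℕ) : Semigroup (Wd k) where
  mul p q := fun n => min (p n + q n) k
  mul_assoc p q r := by
    funext n
    show min (min (p n + q n) k + r n) k = min (p n + min (q n + r n) k) k
    omega

attribute [local instance] Ultrafilter.semigroup Ultrafilter.mul

theorem mul_apply {k : ℕ} (p q : Wd k) (n : ℕ) : (p * q) n = min (p n + q n) k := rfl

/-- the tetris map as a map on `Wd k` -/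
def T {k : ℕ} (p : Wd k) : Wd k := tetris p

theorem T_apply {k : ℕ} (p : Wd k) (n : ℕ) : T p n = p n - 1 := rfl

theorem T_iter_apply {k : ℕ} (j : ℕ) (p : Wd k) (n : ℕ) : (T^[j] p) n = p n - j := by
  induction j generalizing p with
  | zero => simp
  | succ j ih =>
    rw [Function.iterate_succ_apply]
    rw [ih (T p)]
    show p n - 1 - j = p n - (j+1)
    omega

def Fset (k j : ℕ) : Set (Wd k) := fun p => (p : ℕ → ℕ) ∈ FINk j

def Zset (k : ℕ) (n : ℕ) : Set (Wd k) := {p | ∀ i ≤ n, p i = 0}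

def gam (k j : ℕ) : Set (Ultrafilter (Wd k)) :=
  {U | Fset k j ∈ U ∧ ∀ n, Zset k n ∈ U}

theorem uf_eq {α} {U V : Ultrafilter α} (h : ∀ s ∈ V, s ∈ U) : U = V :=
  Ultrafilter.coe_le_coe.mp fun s hs => h s hs

theorem mem_mul_iff {k : ℕ} {U V : Ultrafilter (Wd k)} {s : Set (Wd k)} :
    s ∈ U * V ↔ {p | {q | p * q ∈ s} ∈ V} ∈ U := Iff.rfl

/-- a bound for the support of an element of `FINk j` -/
theorem exists_bound {k j : ℕ} {p : Wd k} (hp : p ∈ Fset k j) :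
    ∃ N, ∀ i, p i ≠ 0 → i ≤ N := by
  obtain ⟨hfin, -, -⟩ := hp
  rcases Set.Finite.bddAbove hfin with ⟨N, hN⟩
  exact ⟨N, fun i hi => hN hi⟩

theorem gam_mul {k i j : ℕ} (hi1 : 1 ≤ i) (hik : i ≤ k) (hj1 : 1 ≤ j) (hjk : j ≤ k)
    {U V : Ultrafilter (Wd k)} (hU : U ∈ gam k i) (hV : V ∈ gam k j) :
    U * V ∈ gam k (max i j) := by
  constructor
  · rw [mem_mul_iff]
    refine Filter.mem_of_superset hU.1 ?_
    intro p hp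
    rcases exists_bound hp with ⟨N, hN⟩
    refine Filter.mem_of_superset (Filter.inter_mem hV.1 (hV.2 N)) ?_
    rintro q ⟨hq, hqZ⟩
    obtain ⟨hpf, hpb, np, hnp⟩ := hp
    obtain ⟨hqf, hqb, nq, hnq⟩ := hq
    refine ⟨?_, ?_, ?_⟩
    · apply Set.Finite.subset (hpf.union hqf)
      intro t ht
      simp only [Set.mem_setOf_eq, mul_apply] at ht
      have h' : p t ≠ 0 ∨ q t ≠ 0 := by omega
      rcases h' with h' | h'
      · exact Set.mem_union_left _ h'
      · exact Set.mem_union_right _ h'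
    · intro t
      have h1 := hpb t
      have h2 := hqb t
      rw [mul_apply]
      rcases le_or_gt t N with h | h
      · have := hqZ t h
        omega
      · have hp0 : p t = 0 := by
          by_contra hne
          exact absurd (hN t hne) (by omega)
        omega
    · rcases le_or_gt i j with hij | hij
      · refine ⟨nq, ?_⟩
        have hq0 : nq > N := by
          by_contra hle
          push_neg at hle
          have := hqZ nq hle
          omega
        have hp0 : p nq = 0 := by
          by_contra hne
          exact absurd (hN nq hne) (by omega)
        rw [mul_apply, hp0]
        simp only [max_eq_right hij]
        omega
      · refine ⟨np, ?_⟩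
        have hple : np ≤ N := hN np (by omega)
        have hq0 : q np = 0 := hqZ np hple
        rw [mul_apply, hq0]
        simp only [max_eq_left hij.le]
        omega
  · intro n
    rw [mem_mul_iff]
    refine Filter.mem_of_superset (hU.2 n) ?_
    intro p hp
    refine Filter.mem_of_superset (hV.2 n) ?_
    intro q hq
    intro t ht
    rw [mul_apply, hp t ht, hq t ht]
    simp



/-- the zero element of `Wd k` -/
def zf (k : ℕ) : Wd k := fun _ => 0

theorem gam_closed (k j : ℕ) : IsClosed (gam k j) := by
  have : gam k j = {U | Fset k j ∈ U} ∩ ⋂ n, {U | Zset k n ∈ U} := by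
    ext U
    simp [gam, Set.mem_iInter, Set.mem_setOf_eq]
  rw [this]
  exact (ultrafilter_isClosed_basic _).inter (isClosed_iInter fun n => ultrafilter_isClosed_basic _)

theorem gam_nonempty {k j : ℕ} (hj : 1 ≤ j) (hjk : j ≤ k) : (gam k j).Nonempty := by
  classical
  let e : ℕ → Wd k := fun m => (fun i => if i = m then j else 0 : ℕ → ℕ)
  refine ⟨(Filter.hyperfilter ℕ : Ultrafilter ℕ).map e, ?_, ?_⟩
  · rw [Ultrafilter.mem_map]
    refine Filter.univ_mem' ?_
    intro m
    show e m ∈ Fset k j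
    refine ⟨?_, ?_, ⟨m, ?_⟩⟩
    · apply Set.Finite.subset (Set.finite_singleton m)
      intro t ht
      simp only [Set.mem_setOf_eq] at ht
      by_contra hc
      simp only [Set.mem_singleton_iff] at hc
      apply ht
      show (if t = m then j else 0) = 0
      rw [if_neg hc]
    · intro t
      show (if t = m then j else 0) ≤ j
      split <;> omega
    · show (if m = m then j else 0) = j
      rw [if_pos rfl]
  · intro n
    rw [Ultrafilter.mem_map]
    have hsub : {m : ℕ | n < m} ⊆ e ⁻¹' Zset k n := by
      intro m hm i hi
      have hm' : n < m := hm
      show (if i = m then j else 0) = 0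
      rw [if_neg (by omega)]
    refine Filter.mem_of_superset ?_ hsub
    have : {m : ℕ | n < m} ∈ (Filter.cofinite : Filter ℕ) := by
      rw [Filter.mem_cofinite]
      have : {m : ℕ | n < m}ᶜ = {m | m ≤ n} := by ext m; simp [not_lt]
      rw [this]
      exact Set.finite_le_nat n
    exact (Filter.hyperfilter_le_cofinite) this

theorem T_mem_Fset {k j : ℕ} {p : Wd k} (hp : p ∈ Fset k (j + 1)) : T p ∈ Fset k j := by
  obtain ⟨hf, hb, n, hn⟩ := hp
  refine ⟨?_, ?_, ⟨n, by rw [T_apply, hn]; omega⟩⟩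
  · apply Set.Finite.subset hf
    intro t ht
    simp only [Set.mem_setOf_eq, T_apply] at ht ⊢
    omega
  · intro t
    have := hb t
    rw [T_apply]
    omega

theorem gam_map_T {k j : ℕ} {U : Ultrafilter (Wd k)} (hU : U ∈ gam k (j + 1)) :
    U.map T ∈ gam k j := by
  constructor
  · rw [Ultrafilter.mem_map]
    exact Filter.mem_of_superset hU.1 fun p hp => T_mem_Fset hp
  · intro n
    rw [Ultrafilter.mem_map]
    refine Filter.mem_of_superset (hU.2 n) fun p hp => ?_
    intro i hi
    show T p i = 0
    rw [T_apply, hp i hi]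

theorem gam_zero_pure {k : ℕ} {U : Ultrafilter (Wd k)} (hU : U ∈ gam k 0) : U = pure (zf k) := by
  have hsub : Fset k 0 ⊆ {zf k} := by
    intro p hp
    obtain ⟨-, hb, -⟩ := hp
    have : p = zf k := by
      funext n
      show p n = 0
      have := hb n
      omega
    simp [this]
  refine uf_eq fun s hs => ?_
  have : zf k ∈ s := hs
  exact Filter.mem_of_superset hU.1 (fun p hp => by
    have := hsub hp
    simp only [Set.mem_singleton_iff] at this
    rwa [this])

/-- bounded set -/
def Bdd (k : ℕ) : Set (Wd k) := {p | ∀ n, p n ≤ k}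

theorem Fset_subset_Bdd {k j : ℕ} (hjk : j ≤ k) : Fset k j ⊆ Bdd k :=
  fun p hp n => le_trans (hp.2.1 n) hjk

theorem pure_zf_mul {k : ℕ} {V : Ultrafilter (Wd k)} (hV : Bdd k ∈ V) :
    pure (zf k) * V = V := by
  refine uf_eq fun s hs => ?_
  rw [mem_mul_iff]
  rw [Ultrafilter.mem_pure]
  refine Filter.mem_of_superset (Filter.inter_mem hs hV) ?_
  rintro q ⟨hq, hqb⟩
  simp only [Set.mem_setOf_eq]
  have : zf k * q = q := by
    funext n
    rw [mul_apply]
    have := hqb n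
    simp only [zf]
    omega
  rwa [this]

theorem mul_pure_zf {k : ℕ} {V : Ultrafilter (Wd k)} (hV : Bdd k ∈ V) :
    V * pure (zf k) = V := by
  refine uf_eq fun s hs => ?_
  rw [mem_mul_iff]
  refine Filter.mem_of_superset (Filter.inter_mem hs hV) ?_
  rintro q ⟨hq, hqb⟩
  simp only [Set.mem_setOf_eq, Ultrafilter.mem_pure]
  have : q * zf k = q := by
    funext n
    rw [mul_apply]
    have := hqb n
    simp only [zf]
    omega
  rwa [this]

/-- `T` is a homomorphism on ultrafilters concentrating on bounded elements
with cofinite support behaviour. -/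
theorem map_T_mul {k i j : ℕ} {U V : Ultrafilter (Wd k)}
    (hU : U ∈ gam k i) (hik : i ≤ k) (hV : V ∈ gam k j) (hjk : j ≤ k) :
    (U * V).map T = U.map T * V.map T := by
  refine uf_eq fun s hs => ?_
  rw [Ultrafilter.mem_map, mem_mul_iff]
  rw [mem_mul_iff] at hs
  rw [Ultrafilter.mem_map] at hs
  have hs' : {p | {q | T p * T q ∈ s} ∈ V} ∈ U := by
    refine Filter.mem_of_superset hs ?_
    intro p hp
    rw [Set.mem_preimage, Set.mem_setOf_eq, Ultrafilter.mem_map] at hp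
    exact hp
  refine Filter.mem_of_superset (Filter.inter_mem hs' hU.1) ?_
  rintro p ⟨hp, hpF⟩
  simp only [Set.mem_setOf_eq] at hp ⊢
  rcases exists_bound hpF with ⟨N, hN⟩
  refine Filter.mem_of_superset
    (Filter.inter_mem hp (Filter.inter_mem hV.1 (hV.2 N))) ?_
  rintro q ⟨hq, hqF, hqZ⟩
  show T (p * q) ∈ s
  have heq : T (p * q) = T p * T q := by
    funext n
    rw [T_apply, mul_apply, mul_apply, T_apply, T_apply]
    have hpb := hpF.2.1 n
    have hqb := hqF.2.1 n
    rcases le_or_gt n N with h | h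
    · have := hqZ n h
      omega
    · have hp0 : p n = 0 := by
        by_contra hne
        exact absurd (hN n hne) (by omega)
      omega
  rw [heq]
  exact hq

/-- the "add one on the support" section of T -/
def sig {k : ℕ} (p : Wd k) : Wd k := (fun n => if p n = 0 then 0 else p n + 1 : ℕ → ℕ)

theorem T_sig {k : ℕ} : (T : Wd k → Wd k) ∘ sig = id := by
  funext p n
  show (T (sig p)) n = p n
  rw [T_apply]
  show (if p n = 0 then 0 else p n + 1) - 1 = p n
  split <;> omega

theorem gam_map_sig {k j : ℕ} (hj : 1 ≤ j) (hjk : j + 1 ≤ k) {U : Ultrafilter (Wd k)}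
    (hU : U ∈ gam k j) : U.map sig ∈ gam k (j + 1) := by
  constructor
  · rw [Ultrafilter.mem_map]
    refine Filter.mem_of_superset hU.1 fun p hp => ?_
    obtain ⟨hf, hb, n, hn⟩ := hp
    rw [Set.mem_preimage]
    refine ⟨?_, ?_, ⟨n, ?_⟩⟩
    · apply Set.Finite.subset hf
      intro t ht
      simp only [Set.mem_setOf_eq] at ht ⊢
      intro h
      apply ht
      show (if p t = 0 then 0 else p t + 1) = 0
      rw [if_pos h]
    · intro t
      have := hb t
      show (if p t = 0 then 0 else p t + 1) ≤ j + 1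
      split <;> omega
    · show (if p n = 0 then 0 else p n + 1) = j + 1
      have h0 : ¬ (p n = 0) := by omega
      rw [if_neg h0, hn]
  · intro n
    rw [Ultrafilter.mem_map]
    refine Filter.mem_of_superset (hU.2 n) fun p hp => ?_
    intro i hi
    show (if p i = 0 then 0 else p i + 1) = 0
    simp [hp i hi]

theorem map_T_map_sig {k : ℕ} (U : Ultrafilter (Wd k)) : (U.map sig).map T = U := by
  rw [Ultrafilter.map_map, T_sig, Ultrafilter.map_id]

theorem closed_mapT_eq {k : ℕ} (U₀ : Ultrafilter (Wd k)) :
    IsClosed {V : Ultrafilter (Wd k) | V.map T = U₀} := by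
  have : {V : Ultrafilter (Wd k) | V.map T = U₀} =
      ⋂ (s : Set (Wd k)) (_ : s ∈ U₀), {V | T ⁻¹' s ∈ V} := by
    ext V
    simp only [Set.mem_setOf_eq, Set.mem_iInter]
    constructor
    · rintro rfl s hs
      rwa [← Ultrafilter.mem_map]
    · intro h
      exact uf_eq fun s hs => Ultrafilter.mem_map.mpr (h s hs)
  rw [this]
  exact isClosed_iInter fun s => isClosed_iInter fun _ => ultrafilter_isClosed_basic _


theorem Bdd_mem_of_gam {k j : ℕ} (hjk : j ≤ k) {U : Ultrafilter (Wd k)} (hU : U ∈ gam k j) :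
    Bdd k ∈ U :=
  Filter.mem_of_superset hU.1 (Fset_subset_Bdd hjk)

theorem chain_aux {k : ℕ} : ∀ j, 1 ≤ j → j ≤ k →
    ∃ Us : ℕ → Ultrafilter (Wd k),
      (∀ i, 1 ≤ i → i ≤ j → Us i ∈ gam k i) ∧
      (∀ i, 2 ≤ i → i ≤ j → (Us i).map T = Us (i - 1)) ∧
      (∀ i i', 1 ≤ i → i ≤ i' → i' ≤ j → Us i * Us i' = Us i' ∧ Us i' * Us i = Us i') := by
  intro j
  induction j with
  | zero => intro h; omega
  | succ j ih =>
    intro h1 hk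
    rcases Nat.eq_zero_or_pos j with rfl | hj
    · -- base case : j + 1 = 1
      obtain ⟨U1, hU1, hid⟩ := exists_idempotent_in_compact_subsemigroup
        Ultrafilter.continuous_mul_left (gam k 1) (gam_nonempty le_rfl hk)
        ((gam_closed k 1).isCompact)
        (fun x hx y hy => by simpa using gam_mul le_rfl hk le_rfl hk hx hy)
      refine ⟨fun _ => U1, ?_, ?_, ?_⟩
      · intro i hi1 hi2
        have : i = 1 := by omega
        subst this; exact hU1
      · intro i hi1 hi2; omega
      · intro i i' hi1 hii' hi2
        have : i = 1 ∧ i' = 1 := by omega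
        exact ⟨hid, hid⟩
    · -- step case : from j to j+1, with 1 ≤ j, j + 1 ≤ k
      obtain ⟨Us, hgam, hmap, hrel⟩ := ih hj (by omega)
      have hjk : j ≤ k := by omega
      have hUj : Us j ∈ gam k j := hgam j hj le_rfl
      -- the T-image of `Us j` absorbs into `Us j`
      have keyL : (Us j).map T * Us j = Us j := by
        rcases Nat.lt_or_ge j 2 with hj2 | hj2
        · have hj1 : j = 1 := by omega
          subst hj1
          have : (Us 1).map T = pure (zf k) :=
            gam_zero_pure (gam_map_T (j := 0) hUj)
          rw [this]
          exact pure_zf_mul (Bdd_mem_of_gam hjk hUj)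
        · rw [hmap j hj2 le_rfl]
          exact (hrel (j-1) j (by omega) (by omega) le_rfl).1
      have keyR : Us j * (Us j).map T = Us j := by
        rcases Nat.lt_or_ge j 2 with hj2 | hj2
        · have hj1 : j = 1 := by omega
          subst hj1
          have : (Us 1).map T = pure (zf k) :=
            gam_zero_pure (gam_map_T (j := 0) hUj)
          rw [this]
          exact mul_pure_zf (Bdd_mem_of_gam hjk hUj)
        · rw [hmap j hj2 le_rfl]
          exact (hrel (j-1) j (by omega) (by omega) le_rfl).2
      have hidem_j : Us j * Us j = Us j := (hrel j j hj le_rfl le_rfl).1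
      -- the compact subsemigroup W
      set W : Set (Ultrafilter (Wd k)) :=
        {V | V ∈ gam k (j+1) ∧ V.map T = Us j ∧ ∀ i, 1 ≤ i → i ≤ j → V * Us i = V} with hW
      have hWclosed : IsClosed W := by
        have : W = gam k (j+1) ∩ ({V | V.map T = Us j} ∩
            ⋂ (i : ℕ) (_ : i ∈ Set.Icc 1 j), {V | V * Us i = V}) := by
          ext V
          simp only [hW, Set.mem_inter_iff, Set.mem_setOf_eq, Set.mem_iInter, Set.mem_Icc,
            and_assoc]
          constructor
          · rintro ⟨h1, h2, h3⟩
            exact ⟨h1, h2, fun i hi => h3 i hi.1 hi.2⟩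
          · rintro ⟨h1, h2, h3⟩
            exact ⟨h1, h2, fun i hi1 hi2 => h3 i ⟨hi1, hi2⟩⟩
        rw [this]
        refine (gam_closed k (j+1)).inter (IsClosed.inter (closed_mapT_eq _) ?_)
        exact isClosed_iInter fun i => isClosed_iInter fun _ =>
          isClosed_eq (Ultrafilter.continuous_mul_left (Us i)) continuous_id
      have hWne : W.Nonempty := by
        have hsig : (Us j).map sig ∈ gam k (j+1) := gam_map_sig hj hk hUj
        refine ⟨Us j * ((Us j).map sig * Us j), ?_, ?_, ?_⟩
        · have h2 : (Us j).map sig * Us j ∈ gam k (j+1) := by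
            have := gam_mul (by omega) hk hj hjk hsig hUj
            rwa [max_eq_left (by omega)] at this
          have := gam_mul hj hjk (by omega) hk hUj h2
          rwa [max_eq_right (by omega)] at this
        · have h2 : (Us j).map sig * Us j ∈ gam k (j+1) := by
            have := gam_mul (by omega) hk hj hjk hsig hUj
            rwa [max_eq_left (by omega)] at this
          rw [map_T_mul hUj hjk h2 hk, map_T_mul hsig hk hUj hjk, map_T_map_sig]
          rw [← mul_assoc, keyL, keyR]
        · intro i hi1 hi2
          rw [mul_assoc, mul_assoc, (hrel i j hi1 hi2 le_rfl).2]
      have hWmul : ∀ x ∈ W, ∀ y ∈ W, x * y ∈ W := by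
        rintro V ⟨hVg, hVT, hVr⟩ V' ⟨hV'g, hV'T, hV'r⟩
        refine ⟨?_, ?_, ?_⟩
        · have := gam_mul (by omega) hk (by omega) hk hVg hV'g
          rwa [max_self] at this
        · rw [map_T_mul hVg hk hV'g hk, hVT, hV'T, hidem_j]
        · intro i hi1 hi2
          rw [mul_assoc, hV'r i hi1 hi2]
      obtain ⟨V1, hV1W, hV1id⟩ := exists_idempotent_in_compact_subsemigroup
        Ultrafilter.continuous_mul_left W hWne hWclosed.isCompact hWmul
      obtain ⟨hV1g, hV1T, hV1r⟩ := hV1W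
      set Unew := Us j * V1 with hUnew
      have hUnew_gam : Unew ∈ gam k (j+1) := by
        have := gam_mul hj hjk (by omega) hk hUj hV1g
        rwa [max_eq_right (by omega)] at this
      have hUnew_T : Unew.map T = Us j := by
        rw [hUnew, map_T_mul hUj hjk hV1g hk, hV1T, keyL]
      have hUnew_id : Unew * Unew = Unew := by
        rw [hUnew, mul_assoc, ← mul_assoc V1 (Us j) V1, hV1r j hj le_rfl, hV1id]
      have habsL : ∀ i, 1 ≤ i → i ≤ j → Us i * Unew = Unew := fun i hi1 hi2 => by
        rw [hUnew, ← mul_assoc, (hrel i j hi1 hi2 le_rfl).1]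
      have habsR : ∀ i, 1 ≤ i → i ≤ j → Unew * Us i = Unew := fun i hi1 hi2 => by
        rw [hUnew, mul_assoc, hV1r i hi1 hi2]
      classical
      refine ⟨Function.update Us (j + 1) Unew, ?_, ?_, ?_⟩
      · intro i hi1 hi2
        by_cases hi : i = j + 1
        · subst hi
          rw [Function.update_self]
          exact hUnew_gam
        · rw [Function.update_of_ne hi]
          exact hgam i hi1 (by omega)
      · intro i hi1 hi2
        by_cases hi : i = j + 1
        · subst hi
          have hne : j + 1 - 1 ≠ j + 1 := by omega
          rw [Function.update_self, Function.update_of_ne hne]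
          have h' : j + 1 - 1 = j := by omega
          rw [h', hUnew_T]
        · have hne' : i - 1 ≠ j + 1 := by omega
          rw [Function.update_of_ne hi, Function.update_of_ne hne']
          exact hmap i hi1 (by omega)
      · intro i i' hi1 hii' hi2
        by_cases hi' : i' = j + 1
        · subst hi'
          by_cases hi : i = j + 1
          · subst hi
            rw [Function.update_self]
            exact ⟨hUnew_id, hUnew_id⟩
          · rw [Function.update_of_ne hi, Function.update_self]
            exact ⟨habsL i hi1 (by omega), habsR i hi1 (by omega)⟩
        · have hi : i ≠ j + 1 := by omega
          rw [Function.update_of_ne hi, Function.update_of_ne hi']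
          exact hrel i i' hi1 hii' (by omega)


theorem tetris_iter_apply (j : ℕ) (p : ℕ → ℕ) (n : ℕ) : (tetris^[j] p) n = p n - j := by
  induction j generalizing p with
  | zero => simp
  | succ j ih =>
    rw [Function.iterate_succ_apply, ih (tetris p)]
    show p n - 1 - j = p n - (j+1)
    omega

/-- bundle of the chain of idempotent ultrafilters plus the chosen color class -/
structure Setup (k : ℕ) where
  Us : ℕ → Ultrafilter (Wd k)
  hk : 1 ≤ k
  hgam : ∀ i, 1 ≤ i → i ≤ k → Us i ∈ gam k i
  hmap : ∀ i, 2 ≤ i → i ≤ k → (Us i).map T = Us (i - 1)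
  hrel : ∀ i i', 1 ≤ i → i ≤ i' → i' ≤ k → Us i * Us i' = Us i' ∧ Us i' * Us i = Us i'
  C0 : Set (Wd k)
  hC : C0 ∈ Us k

variable {k : ℕ}

theorem Setup.Uprod (S : Setup k) {a b : ℕ} (ha : a < k) (hb : b < k) :
    S.Us (k - a) * S.Us (k - b) = S.Us (k - min a b) := by
  rcases le_total a b with h | h
  · have h2 := (S.hrel (k - b) (k - a) (by omega) (by omega) (by omega)).2
    rw [h2, min_eq_left h]
  · have h2 := (S.hrel (k - a) (k - b) (by omega) (by omega) (by omega)).1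
    rw [h2, min_eq_right h]

theorem Setup.Umap_iter (S : Setup k) : ∀ {j : ℕ}, j < k →
    (S.Us k).map (T^[j]) = S.Us (k - j) := by
  intro j
  induction j with
  | zero =>
    intro _
    rw [Function.iterate_zero, Ultrafilter.map_id, Nat.sub_zero]
  | succ j ih =>
    intro hj
    rw [Function.iterate_succ', ← Ultrafilter.map_map, ih (by omega),
      S.hmap (k - j) (by omega) (by omega)]
    have : k - j - 1 = k - (j + 1) := by omega
    rw [this]

/-- tuples of sets, one in each ultrafilter of the chain -/
def StT (S : Setup k) : Type := {B : ℕ → Set (Wd k) // ∀ j, j < k → B j ∈ S.Us (k - j)}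

def starSet (S : Setup k) (B : ℕ → Set (Wd k)) (j : ℕ) : Set (Wd k) :=
  B j ∩ ⋂ j' ∈ Finset.range k, {x | {y | x * y ∈ B (min j j')} ∈ S.Us (k - j')}

theorem starSet_mem (S : Setup k) {B : ℕ → Set (Wd k)}
    (hB : ∀ j, j < k → B j ∈ S.Us (k - j)) {j : ℕ} (hj : j < k) :
    starSet S B j ∈ S.Us (k - j) := by
  refine Filter.inter_mem (hB j hj) ?_
  refine (Filter.biInter_finset_mem _).mpr fun j' hj' => ?_
  have hj'k : j' < k := Finset.mem_range.mp hj'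
  have hmem : B (min j j') ∈ S.Us (k - j) * S.Us (k - j') := by
    rw [S.Uprod hj hj'k]
    exact hB _ (by omega)
  exact hmem

def chooseSet (S : Setup k) (B : ℕ → Set (Wd k)) : Set (Wd k) :=
  Fset k k ∩ ⋂ j ∈ Finset.range k, T^[j] ⁻¹' starSet S B j

theorem chooseSet_mem (S : Setup k) {B : ℕ → Set (Wd k)}
    (hB : ∀ j, j < k → B j ∈ S.Us (k - j)) : chooseSet S B ∈ S.Us k := by
  refine Filter.inter_mem ((S.hgam k S.hk le_rfl).1) ?_
  refine (Filter.biInter_finset_mem _).mpr fun j hj => ?_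
  have hjk : j < k := Finset.mem_range.mp hj
  have h : starSet S B j ∈ (S.Us k).map (T^[j]) := by
    rw [S.Umap_iter hjk]
    exact starSet_mem S hB hjk
  rwa [Ultrafilter.mem_map] at h

noncomputable def pick (S : Setup k) (B : StT S) : Wd k :=
  (Ultrafilter.nonempty_of_mem (chooseSet_mem S B.2)).some

theorem pick_mem (S : Setup k) (B : StT S) : pick S B ∈ chooseSet S B.1 :=
  Set.Nonempty.some_mem _

theorem pick_F (S : Setup k) (B : StT S) : pick S B ∈ Fset k k := (pick_mem S B).1

theorem pick_star (S : Setup k) (B : StT S) {j : ℕ} (hj : j < k) :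
    T^[j] (pick S B) ∈ starSet S B.1 j := by
  have h := (pick_mem S B).2
  exact Set.mem_iInter₂.mp h j (Finset.mem_range.mpr hj)

noncomputable def bnd (S : Setup k) (B : StT S) : ℕ := (exists_bound (pick_F S B)).choose

theorem bnd_spec (S : Setup k) (B : StT S) : ∀ i, pick S B i ≠ 0 → i ≤ bnd S B :=
  (exists_bound (pick_F S B)).choose_spec

def nextSet (S : Setup k) (B : StT S) (j : ℕ) : Set (Wd k) :=
  (starSet S B.1 j ∩
    ⋂ j' ∈ Finset.range k, {y | T^[j'] (pick S B) * y ∈ B.1 (min j' j)}) ∩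
  Zset k (bnd S B)

theorem nextSet_mem (S : Setup k) (B : StT S) {j : ℕ} (hj : j < k) :
    nextSet S B j ∈ S.Us (k - j) := by
  refine Filter.inter_mem (Filter.inter_mem (starSet_mem S B.2 hj) ?_) ?_
  · refine (Filter.biInter_finset_mem _).mpr fun j' hj' => ?_
    have hj'k : j' < k := Finset.mem_range.mp hj'
    have h := (pick_star S B hj'k).2
    exact Set.mem_iInter₂.mp h j (Finset.mem_range.mpr hj)
  · exact (S.hgam (k - j) (by omega) (by omega)).2 (bnd S B)

noncomputable def nextB (S : Setup k) (B : StT S) : StT S :=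
  ⟨nextSet S B, fun _ hj => nextSet_mem S B hj⟩

def B0 (S : Setup k) : StT S :=
  ⟨fun j => if j = 0 then S.C0 else Set.univ, by
    intro j hj
    by_cases h : j = 0
    · subst h
      show (if (0:ℕ) = 0 then S.C0 else Set.univ) ∈ S.Us (k - 0)
      rw [if_pos rfl, Nat.sub_zero]
      exact S.hC
    · show (if j = 0 then S.C0 else Set.univ) ∈ S.Us (k - j)
      rw [if_neg h]
      exact Filter.univ_mem⟩

noncomputable def seqS (S : Setup k) : ℕ → StT S
  | 0 => B0 S
  | n + 1 => nextB S (seqS S n)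

noncomputable def aseq (S : Setup k) (n : ℕ) : Wd k := pick S (seqS S n)

noncomputable def nbd (S : Setup k) (n : ℕ) : ℕ := bnd S (seqS S n)

theorem seq_mono (S : Setup k) (n j : ℕ) : (seqS S (n + 1)).1 j ⊆ (seqS S n).1 j :=
  fun _ hy => hy.1.1.1

theorem seq_chain (S : Setup k) {n m : ℕ} (h : n ≤ m) (j : ℕ) :
    (seqS S m).1 j ⊆ (seqS S n).1 j := by
  induction m, h using Nat.le_induction with
  | base => exact subset_rfl
  | succ m hm ih => exact (seq_mono S m j).trans ih

theorem absorb (S : Setup k) (n : ℕ) {j j' : ℕ} (hj' : j' < k) {y : Wd k}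
    (hy : y ∈ (seqS S (n + 1)).1 j) :
    T^[j'] (aseq S n) * y ∈ (seqS S n).1 (min j' j) :=
  Set.mem_iInter₂.mp hy.1.2 j' (Finset.mem_range.mpr hj')

theorem zpart (S : Setup k) (n j : ℕ) {y : Wd k} (hy : y ∈ (seqS S (n + 1)).1 j) :
    y ∈ Zset k (nbd S n) := hy.2

theorem aseq_F (S : Setup k) (n : ℕ) : aseq S n ∈ Fset k k := pick_F S (seqS S n)

theorem aseq_le (S : Setup k) (n t : ℕ) : aseq S n t ≤ k := (aseq_F S n).2.1 t

theorem aseq_star (S : Setup k) (n : ℕ) {j : ℕ} (hj : j < k) :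
    T^[j] (aseq S n) ∈ starSet S (seqS S n).1 j := pick_star S (seqS S n) hj

theorem aseq_mem0 (S : Setup k) (n : ℕ) : aseq S n ∈ (seqS S n).1 0 := by
  have hk := S.hk
  have h := (aseq_star S n (by omega : (0:ℕ) < k)).1
  simpa using h

theorem aseq_blocks (S : Setup k) {n m i t : ℕ} (h : n < m)
    (hi : aseq S n i ≠ 0) (ht : aseq S m t ≠ 0) : i < t := by
  have h1 : aseq S m ∈ (seqS S (n + 1)).1 0 :=
    seq_chain S (by omega) 0 (aseq_mem0 S m)
  have h2 : aseq S m ∈ Zset k (nbd S n) := zpart S n 0 h1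
  have h3 : i ≤ nbd S n := bnd_spec S (seqS S n) i hi
  by_contra hc
  push_neg at hc
  exact ht (h2 t (by omega))

theorem aseq_disj (S : Setup k) {n m t : ℕ} (h : n ≠ m) (hn : aseq S n t ≠ 0) :
    aseq S m t = 0 := by
  by_contra hm
  rcases Nat.lt_or_ge n m with hlt | hge
  · exact absurd (aseq_blocks S hlt hn hm) (lt_irrefl t)
  · have : m < n := by omega
    exact absurd (aseq_blocks S this hm hn) (lt_irrefl t)

/-- minimum of a tuple of levels -/
def minLevel : (m : ℕ) → (Fin (m + 1) → ℕ) → ℕ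
  | 0, js => js 0
  | m + 1, js => min (js 0) (minLevel m (fun i => js i.succ))

theorem minLevel_le : ∀ (m : ℕ) (js : Fin (m + 1) → ℕ) (i : Fin (m + 1)),
    minLevel m js ≤ js i := by
  intro m
  induction m with
  | zero =>
    intro js i
    rw [Fin.eq_zero i]
    exact le_rfl
  | succ m ih =>
    intro js i
    rcases Fin.eq_zero_or_eq_succ i with rfl | ⟨i', rfl⟩
    · exact min_le_left _ _
    · exact le_trans (min_le_right _ _) (ih _ i')

noncomputable def sumT (S : Setup k) (m : ℕ) (ns js : Fin (m + 1) → ℕ) : Wd k :=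
  (fun t => ∑ i : Fin (m + 1), (T^[js i] (aseq S (ns i))) t : ℕ → ℕ)

theorem term_le (S : Setup k) (j n t : ℕ) : T^[j] (aseq S n) t ≤ k := by
  rw [T_iter_apply]
  have := aseq_le S n t
  omega

theorem sumT_le (S : Setup k) : ∀ (m : ℕ) (ns js : Fin (m + 1) → ℕ),
    StrictMono ns → ∀ t, sumT S m ns js t ≤ k := by
  intro m
  induction m with
  | zero =>
    intro ns js _ t
    show (∑ i : Fin 1, (T^[js i] (aseq S (ns i))) t) ≤ k
    rw [Fin.sum_univ_one]
    exact term_le S _ _ t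
  | succ m ih =>
    intro ns js hns t
    show (∑ i : Fin (m + 2), (T^[js i] (aseq S (ns i))) t) ≤ k
    rw [Fin.sum_univ_succ]
    by_cases h : aseq S (ns 0) t = 0
    · have hz : (T^[js 0] (aseq S (ns 0))) t = 0 := by
        rw [T_iter_apply, h]
        omega
      rw [hz, zero_add]
      have hns' : StrictMono (fun i : Fin (m + 1) => ns i.succ) :=
        fun a b hab => hns (Fin.succ_lt_succ_iff.mpr hab)
      exact ih (fun i => ns i.succ) (fun i => js i.succ) hns' t
    · have hz : ∀ i : Fin (m + 1), (T^[js i.succ] (aseq S (ns i.succ))) t = 0 := by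
        intro i
        have hne : ns 0 ≠ ns i.succ := ne_of_lt (hns (Fin.succ_pos i))
        have h0 : aseq S (ns i.succ) t = 0 := aseq_disj S hne h
        rw [T_iter_apply, h0]
        omega
      rw [Finset.sum_eq_zero (fun i _ => hz i), add_zero]
      exact term_le S _ _ t

theorem sum_mem (S : Setup k) : ∀ (m : ℕ) (ns js : Fin (m + 1) → ℕ),
    StrictMono ns → (∀ i, js i < k) →
    sumT S m ns js ∈ (seqS S (ns 0)).1 (minLevel m js) := by
  intro m
  induction m with
  | zero =>
    intro ns js _ hjs
    have heq : sumT S 0 ns js = T^[js 0] (aseq S (ns 0)) := by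
      funext t
      show (∑ i : Fin 1, (T^[js i] (aseq S (ns i))) t) = _
      rw [Fin.sum_univ_one]
    show sumT S 0 ns js ∈ (seqS S (ns 0)).1 (js 0)
    rw [heq]
    exact (aseq_star S (ns 0) (hjs 0)).1
  | succ m ih =>
    intro ns js hns hjs
    have hns' : StrictMono (fun i : Fin (m + 1) => ns i.succ) :=
      fun a b hab => hns (Fin.succ_lt_succ_iff.mpr hab)
    have hy := ih (fun i => ns i.succ) (fun i => js i.succ) hns' (fun i => hjs i.succ)
    have h01 : ns 0 < (fun i : Fin (m + 1) => ns i.succ) 0 := hns (Fin.succ_pos 0)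
    have hy2 : sumT S m (fun i => ns i.succ) (fun i => js i.succ) ∈
        (seqS S (ns 0 + 1)).1 (minLevel m (fun i => js i.succ)) :=
      seq_chain S h01 _ hy
    have hx := absorb S (ns 0) (hjs 0) hy2
    have heq : sumT S (m + 1) ns js =
        T^[js 0] (aseq S (ns 0)) * sumT S m (fun i => ns i.succ) (fun i => js i.succ) := by
      funext t
      have h1 : (T^[js 0] (aseq S (ns 0)) *
          sumT S m (fun i => ns i.succ) (fun i => js i.succ)) t =
          min ((T^[js 0] (aseq S (ns 0))) t +
            sumT S m (fun i => ns i.succ) (fun i => js i.succ) t) k := rfl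
      have h2 : sumT S (m + 1) ns js t =
          (T^[js 0] (aseq S (ns 0))) t +
            sumT S m (fun i => ns i.succ) (fun i => js i.succ) t := by
        show (∑ i : Fin (m + 2), (T^[js i] (aseq S (ns i))) t) = _
        rw [Fin.sum_univ_succ]
        rfl
      have h3 := sumT_le S (m + 1) ns js hns t
      rw [h2] at h3 ⊢
      rw [h1]
      omega
    rw [show minLevel (m + 1) js = min (js 0) (minLevel m (fun i => js i.succ)) from rfl]
    rw [heq]
    exact hx

theorem extract (S : Setup k) :
    ∃ A : ℕ → (ℕ → ℕ), IsBlockSeq k A ∧ ∀ p ∈ blockSpan k A, p ∈ S.C0 := by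
  classical
  refine ⟨fun n => aseq S n,
    ⟨fun n => aseq_F S n, fun n m h i t hi ht => aseq_blocks S h hi ht⟩, ?_⟩
  rintro p ⟨m, ns, js, hmono, hle, ⟨i₀, hi₀⟩, rfl⟩
  set s : Finset (Fin (m + 1)) := Finset.univ.filter (fun i => js i < k) with hs
  have hk1 := S.hk
  have hi₀s : i₀ ∈ s := by
    rw [hs, Finset.mem_filter]
    exact ⟨Finset.mem_univ _, by rw [hi₀]; omega⟩
  have hcard : s.card = (s.card - 1) + 1 := by
    have : 0 < s.card := Finset.card_pos.mpr ⟨i₀, hi₀s⟩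
    omega
  set m' := s.card - 1 with hm'
  set emb := s.orderEmbOfFin hcard with hemb
  have hmem : ∀ i, emb i ∈ s := fun i => s.orderEmbOfFin_mem hcard i
  have hjs2 : ∀ i, js (emb i) < k := fun i => (Finset.mem_filter.mp (hmem i)).2
  have hmono2 : StrictMono (fun i : Fin (m' + 1) => ns (emb i)) :=
    hmono.comp emb.strictMono
  have hsurj : ∃ i', emb i' = i₀ := by
    have hr := s.range_orderEmbOfFin hcard
    rw [Set.ext_iff] at hr
    exact (hr i₀).mpr (by exact_mod_cast hi₀s)
  obtain ⟨i', hi'⟩ := hsurj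
  have himg : Finset.image emb Finset.univ = s := by
    ext x
    simp only [Finset.mem_image, Finset.mem_univ, true_and]
    constructor
    · rintro ⟨i, rfl⟩; exact hmem i
    · intro hx
      have hr := s.range_orderEmbOfFin hcard
      rw [Set.ext_iff] at hr
      exact (hr x).mpr (by exact_mod_cast hx)
  have heqp : (fun t => ∑ i : Fin (m + 1), (tetris^[js i] ((fun n => aseq S n) (ns i))) t)
      = sumT S m' (fun i => ns (emb i)) (fun i => js (emb i)) := by
    funext t
    show (∑ i : Fin (m + 1), (tetris^[js i] (aseq S (ns i))) t)
      = sumT S m' (fun i => ns (emb i)) (fun i => js (emb i)) t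
    have hR : sumT S m' (fun i => ns (emb i)) (fun i => js (emb i)) t
        = ∑ i : Fin (m' + 1), (aseq S (ns (emb i)) t - js (emb i)) := by
      show (∑ i : Fin (m' + 1), (T^[js (emb i)] (aseq S (ns (emb i)))) t) = _
      exact Finset.sum_congr rfl fun i _ => T_iter_apply _ _ _
    have hL : (∑ i : Fin (m + 1), (tetris^[js i] (aseq S (ns i))) t)
        = ∑ i : Fin (m + 1), (aseq S (ns i) t - js i) :=
      Finset.sum_congr rfl fun i _ => tetris_iter_apply _ _ _
    rw [hL, hR]
    have hvanish : ∀ i ∈ Finset.univ, i ∉ s → aseq S (ns i) t - js i = 0 := by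
      intro i _ hi
      have hnlt : ¬ js i < k := by
        intro hlt
        exact hi (by rw [hs, Finset.mem_filter]; exact ⟨Finset.mem_univ _, hlt⟩)
      have h1 := hle i
      have h2 := aseq_le S (ns i) t
      omega
    rw [← Finset.sum_subset (Finset.subset_univ s) hvanish]
    rw [← himg, Finset.sum_image (fun a _ b _ h => emb.injective h)]
  rw [heqp]
  have hminz : minLevel m' (fun i => js (emb i)) = 0 := by
    have h1 := minLevel_le m' (fun i => js (emb i)) i'
    simp only [hi', hi₀] at h1
    omega
  have hfin := sum_mem S m' (fun i => ns (emb i)) (fun i => js (emb i)) hmono2 hjs2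
  rw [hminz] at hfin
  have hfin2 := seq_chain S (Nat.zero_le _) 0 hfin
  have hB00 : (seqS S 0).1 0 = S.C0 := by
    show (B0 S).1 0 = S.C0
    show (if (0:ℕ) = 0 then S.C0 else Set.univ) = S.C0
    rw [if_pos rfl]
  rw [hB00] at hfin2
  exact hfin2

end GowersAux

/-- Gowers: every finite coloring of `FIN_k` is constant on
the combinatorial span of some infinite basic block sequence. -/
theorem gowers_FINk (k r : ℕ) (hk : 0 < k) (hr : 1 ≤ r)
    (f : (ℕ → ℕ) → Fin r) :
    ∃ A : ℕ → (ℕ → ℕ), IsBlockSeq k A ∧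
      ∃ c : Fin r, ∀ p ∈ blockSpan k A, f p = c := by
  classical
  obtain ⟨Us, hgam, hmap, hrel⟩ := GowersAux.chain_aux (k := k) k hk le_rfl
  have hex : ∃ c : Fin r, (f ⁻¹' {c} : Set (GowersAux.Wd k)) ∈ Us k := by
    by_contra hno
    push_neg at hno
    have hcompl : ∀ c : Fin r, ((f ⁻¹' {c} : Set (GowersAux.Wd k))ᶜ) ∈ Us k :=
      fun c => Ultrafilter.compl_mem_iff_notMem.mpr (hno c)
    have hint : (⋂ c : Fin r, ((f ⁻¹' {c} : Set (GowersAux.Wd k))ᶜ)) ∈ Us k :=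
      (Filter.iInter_mem).mpr hcompl
    obtain ⟨x, hx⟩ := Ultrafilter.nonempty_of_mem hint
    rw [Set.mem_iInter] at hx
    exact (hx (f x)) rfl
  obtain ⟨c, hc⟩ := hex
  obtain ⟨A, hbs, hmem⟩ := GowersAux.extract
    ⟨Us, hk, hgam, hmap, hrel, (f ⁻¹' {c} : Set (GowersAux.Wd k)), hc⟩
  exact ⟨A, hbs, c, fun p hp => hmem p hp⟩
end

section
/- (Hindman's theorem, block sequence form) For every finite coloring of FIN (the set of nonempty finite subsets of ℕ) there exists an infinite block sequence (a_n)_{n∈ℕ} of finite sets (with max(a_n) < min(a_{n+1})) such that all finite unions a_{n_0} ∪ ⋯ ∪ a_{n_m}, n_0 < ⋯ < n_m, receive the same color. -/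
/-!
Make the finite sets into a semigroup with an absorbing `zero`, in which `a * b = a ∪ b` when `a`
lies entirely below `b` and `a * b = zero` otherwise. The finite products of `{0}, {1}, {2}, …` are
exactly the nonempty finite sets, so colouring them by `f` gives a finite cover of an FP-set, and
Hindman's theorem for semigroups yields a sequence all of whose finite products lie in one colour
class. None of those products is `zero`, which forces the sequence to be a block sequence; its
finite products are then the finite unions of its terms.
-/

open Hindman

def BlockLT (a b : Finset ℕ) : Prop := ∀ i ∈ a, ∀ j ∈ b, i < j

instance : DecidableRel BlockLT := fun a b =>
  inferInstanceAs (Decidable (∀ i ∈ a, ∀ j ∈ b, i < j))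

lemma blockLT_union_left {a b c : Finset ℕ} :
    BlockLT (a ∪ b) c ↔ BlockLT a c ∧ BlockLT b c := by
  simp only [BlockLT, Finset.mem_union]
  grind

lemma blockLT_union_right {a b c : Finset ℕ} :
    BlockLT a (b ∪ c) ↔ BlockLT a b ∧ BlockLT a c := by
  simp only [BlockLT, Finset.mem_union]
  grind

inductive BlockUnion
  | zero
  | of (a : Finset ℕ)

namespace BlockUnion

instance : Mul BlockUnion where
  mul
    | of a, of b => if BlockLT a b then of (a ∪ b) else zero
    | _, _ => zero

lemma of_mul_of (a b : Finset ℕ) :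
    of a * of b = if BlockLT a b then of (a ∪ b) else zero := rfl

@[simp] lemma zero_mul (x : BlockUnion) : zero * x = zero := rfl

@[simp] lemma mul_zero (x : BlockUnion) : x * zero = zero := by cases x <;> rfl

lemma of_mul_of_of_blockLT {a b : Finset ℕ} (h : BlockLT a b) : of a * of b = of (a ∪ b) := by
  rw [of_mul_of, if_pos h]

lemma blockLT_of_of_mul_of_eq {a b c : Finset ℕ} (h : of a * of b = of c) : BlockLT a b := by
  by_contra hab
  simp [of_mul_of, hab] at h

instance : Semigroup BlockUnion where
  mul_assoc := by
    rintro (_ | a) (_ | b) (_ | c)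
    all_goals try simp
    by_cases hab : BlockLT a b <;> by_cases hbc : BlockLT b c <;> by_cases hac : BlockLT a c <;>
      simp [of_mul_of, hab, hbc, hac, blockLT_union_left, blockLT_union_right, Finset.union_assoc]

lemma FP_singletons_subset (k : ℕ) :
    FP (fun n => of {n + k}) ⊆ {x | ∃ s : Finset ℕ, s.Nonempty ∧ (∀ i ∈ s, k ≤ i) ∧ of s = x} := by
  suffices ∀ b m, m ∈ FP b → ∀ k, b = (fun n => of {n + k}) →
      ∃ s : Finset ℕ, s.Nonempty ∧ (∀ i ∈ s, k ≤ i) ∧ of s = m from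
    fun m hm => this _ m hm k rfl
  have tail_eq (k : ℕ) : Stream'.tail (fun n => of {n + k}) = fun n => of {n + (k + 1)} := by
    funext n
    simp [Stream'.tail, Stream'.get, Nat.add_right_comm, Nat.add_assoc]
  intro b m h
  induction h with
  | head' b =>
    rintro k rfl
    exact ⟨{k}, by simp, by simp, by simp [Stream'.head, Stream'.get]⟩
  | tail' b m _ ih =>
    rintro k rfl
    obtain ⟨s, hs, hk, rfl⟩ := ih (k + 1) (tail_eq k)
    exact ⟨s, hs, fun i hi => (hk i hi).trans' k.le_succ, rfl⟩
  | cons' b m _ ih =>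
    rintro k rfl
    obtain ⟨s, -, hk, rfl⟩ := ih (k + 1) (tail_eq k)
    refine ⟨{k} ∪ s, by simp, by simp only [Finset.mem_union, Finset.mem_singleton]; grind, ?_⟩
    rw [← of_mul_of_of_blockLT (by simpa [BlockLT] using hk)]
    simp [Stream'.head, Stream'.get]

lemma of_sup_mem_FP {a : ℕ → Finset ℕ} (ha : ∀ n m, n < m → BlockLT (a n) (a m))
    {s : Finset ℕ} (hs : s.Nonempty) : of (s.sup a) ∈ FP (fun n => of (a n)) := by
  set x : Stream' BlockUnion := fun n => of (a n)
  suffices ∀ k, (∀ i ∈ s, k ≤ i) → of (s.sup a) ∈ FP (x.drop k) by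
    simpa using this 0 (by simp)
  induction s using Finset.induction_on_min with
  | empty => exact absurd hs Finset.not_nonempty_empty
  | insert m s hm ih =>
    intro k hk
    have hkm : k ≤ m := hk m (Finset.mem_insert_self m s)
    have hdrop : x.drop m = (x.drop k).drop (m - k) := by
      rw [Stream'.drop_drop, Nat.add_sub_cancel' hkm]
    refine FP_drop_subset_FP _ (m - k) ?_
    rw [← hdrop, Finset.sup_insert]
    rcases s.eq_empty_or_nonempty with rfl | hs'
    · rw [Finset.sup_empty, sup_bot_eq]
      have := FP.head (x.drop m)
      rwa [Stream'.head_drop] at this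
    have hlt : BlockLT (a m) (s.sup a) := by
      intro i hi j hj
      obtain ⟨n, hn, hjn⟩ := Finset.mem_sup.mp hj
      exact ha m n (hm n hn) i hi j hjn
    rw [Finset.sup_eq_union, ← of_mul_of_of_blockLT hlt]
    have := FP.cons (x.drop m) (of (s.sup a)) ?_
    · rwa [Stream'.head_drop] at this
    rw [Stream'.tail_drop]
    exact ih hs' (m + 1) hm

end BlockUnion

open BlockUnion in
theorem hindman_block_sequences_general (r : ℕ)
    (f : Finset ℕ → Fin r) :
    ∃ a : ℕ → Finset ℕ,
      (∀ n, (a n).Nonempty) ∧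
      (∀ n m : ℕ, n < m → ∀ i ∈ a n, ∀ j ∈ a m, i < j) ∧
      ∃ c : Fin r, ∀ s : Finset ℕ, s.Nonempty → f (s.sup a) = c := by
  have hcover : FP (fun n => of {n}) ⊆ ⋃₀ Set.range fun c => of '' {s | s.Nonempty ∧ f s = c} := by
    intro x hx
    obtain ⟨s, hs, -, rfl⟩ := FP_singletons_subset 0 hx
    refine Set.mem_sUnion_of_mem ?_ (Set.mem_range_self (f s))
    exact ⟨s, ⟨hs, rfl⟩, rfl⟩
  obtain ⟨-, ⟨c, rfl⟩, b, hb⟩ := FP_partition_regular _ _ (Set.finite_range _) hcover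
  choose a ha hab using fun n => hb (FP.singleton b n)
  obtain rfl : b = fun n => of (a n) := funext fun n => (hab n).symm
  have hblock (n m : ℕ) (hnm : n < m) : BlockLT (a n) (a m) := by
    obtain ⟨u, -, hu⟩ := hb (FP.mul_two _ n m hnm)
    exact blockLT_of_of_mul_of_eq hu.symm
  refine ⟨a, fun n => (ha n).1, hblock, c, fun s hs => ?_⟩
  obtain ⟨_, hu, ⟨⟩⟩ := hb (of_sup_mem_FP hblock hs)
  exact hu.2

/-- Hindman, block sequence form: for every finite coloring
of the nonempty finite subsets of `ℕ` there is an infinite block sequence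
`(a_n)` of finite sets (with `max (a n) < min (a m)` for `n < m`) all of
whose finite unions receive the same color. -/
theorem hindman_block_sequences (r : ℕ) (hr : 0 < r)
    (f : Finset ℕ → Fin r) :
    ∃ a : ℕ → Finset ℕ,
      (∀ n, (a n).Nonempty) ∧
      (∀ n m : ℕ, n < m → ∀ i ∈ a n, ∀ j ∈ a m, i < j) ∧
      ∃ c : Fin r, ∀ s : Finset ℕ, s.Nonempty → f (s.sup a) = c :=
  hindman_block_sequences_general r f
end
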